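/- Local bound on the eccentricity: under the positive Ricci curvature assumption with constant κ ∈ (0,1], for every x ∈ 𝒳 the eccentricity satisfies E(x) ≤ (1/κ) ∫ d(x,y) P_x(dy). -/

import Mathlib

/-! Comparing `P_y` with `P_x` through any coupling, the triangle inequality gives
`∫ d(x,·) dP_y ≤ ∫ d(x,·) dP_x + (1-κ) d(x,y)`. Integrating in `y` against the invariant
measure `π = πP` yields `E(x) ≤ ∫ d(x,·) dP_x + (1-κ) E(x)`, and `E(x) < ∞` lets us solve
for `E(x)`. -/

open MeasureTheory ENNReal
open scoped NNReal

noncomputable section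

variable {X : Type*} [MetricSpace X] [MeasurableSpace X]

/-- The L¹ Wasserstein distance between two measures on a metric space,
defined as the infimum of the transport cost over all couplings. -/
def W1 (μ ν : Measure X) : ℝ≥0∞ :=
  ⨅ (ξ : Measure (X × X)) (_ : ξ.map Prod.fst = μ) (_ : ξ.map Prod.snd = ν),
    ∫⁻ p, edist p.1 p.2 ∂ξ

/-- The Markov kernel `P` has (coarse) Ricci curvature at least `κ`:
`W₁(P_x, P_y) ≤ (1-κ) d(x,y)` for all `x, y`. -/
def PosCurvature (P : X → Measure X) (κ : ℝ) : Prop :=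
  ∀ x y : X, W1 (P x) (P y) ≤ ENNReal.ofReal ((1 - κ) * dist x y)

/-- `N`-step transition kernel: `stepN P 0 x = δ_x` and
`stepN P (N+1) x = ∫ P_z(dy) (stepN P N x)(dz)`. -/
def stepN (P : X → Measure X) : ℕ → X → Measure X
  | 0 => fun x => Measure.dirac x
  | n + 1 => fun x => (stepN P n x).bind P

/-- Iterated averaging operator `P^N f (x) = ∫ f d(P_x^N)`. -/
def avgN (P : X → Measure X) (n : ℕ) (f : X → ℝ) (x : X) : ℝ :=
  ∫ y, f y ∂(stepN P n x)

/-- Law of the trajectory `(X_1, …, X_n)` of the Markov chain started at `x`. -/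
def pathLaw (P : X → Measure X) : (n : ℕ) → X → Measure (Fin n → X)
  | 0 => fun _ => Measure.dirac (fun i : Fin 0 => i.elim0)
  | n + 1 => fun x => (P x).bind fun y => (pathLaw P n y).map (fun p => Fin.cons y p)

/-- Empirical mean `π̂(f) = (1/T) ∑_{k=T₀+1}^{T₀+T} f(X_k)`, as a function of the
trajectory `(X_1, …, X_{T₀+T})`. -/
def empMean (f : X → ℝ) (T₀ T : ℕ) (p : Fin (T₀ + T) → X) : ℝ :=
  (1 / (T : ℝ)) * ∑ i : Fin (T₀ + T), if T₀ ≤ (i : ℕ) then f (p i) else 0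

/-- Expectation `E_x π̂(f)` of the empirical mean for the chain started at `x`. -/
def empExp (P : X → Measure X) (f : X → ℝ) (T₀ T : ℕ) (x : X) : ℝ :=
  ∫ p, empMean f T₀ T p ∂(pathLaw P (T₀ + T) x)

/-- Variance `Var_x π̂(f)` of the empirical mean for the chain started at `x`. -/
def empVar (P : X → Measure X) (f : X → ℝ) (T₀ T : ℕ) (x : X) : ℝ :=
  ∫ p, (empMean f T₀ T p - empExp P f T₀ T x) ^ 2 ∂(pathLaw P (T₀ + T) x)

/-- Lipschitz seminorm `‖f‖_Lip = sup_{x ≠ y} |f(x) - f(y)|/d(x,y)`, as the least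
Lipschitz constant of `f`. -/
def lipNorm (f : X → ℝ) : ℝ :=
  sInf {K : ℝ | ∀ x y : X, |f x - f y| ≤ K * dist x y}

/-- Coarse diffusion constant `σ(x)² = ½ ∬ d(y,z)² P_x(dy) P_x(dz)`. -/
def diffSq (P : X → Measure X) (x : X) : ℝ :=
  (1 / 2) * ∫ y, ∫ z, dist y z ^ 2 ∂(P x) ∂(P x)

/-- Local dimension `n_x`. -/
def localDim (P : X → Measure X) (x : X) : ℝ :=
  sInf {r : ℝ | ∃ f : X → ℝ, (∃ K : ℝ≥0, LipschitzWith K f) ∧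
    (∫ y, ∫ z, |f y - f z| ^ 2 ∂(P x) ∂(P x)) ≠ 0 ∧
    r = (∫ y, ∫ z, dist y z ^ 2 ∂(P x) ∂(P x)) /
        (∫ y, ∫ z, |f y - f z| ^ 2 ∂(P x) ∂(P x))}

/-- Support of a measure: the set of points all of whose open neighborhoods have
positive measure. -/
def msupp (μ : Measure X) : Set X :=
  {x : X | ∀ U : Set X, IsOpen U → x ∈ U → μ U ≠ 0}

/-- Granularity `σ_∞ = ½ sup_x diam (supp P_x)`, valued in `ℝ≥0∞`. -/
def granularity (P : X → Measure X) : ℝ≥0∞ :=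
  (1 / 2) * ⨆ x : X, EMetric.diam (msupp (P x))

/-- Eccentricity `E(x) = ∫ d(x,y) π(dy)`. -/
def ecc (π : Measure X) (x : X) : ℝ := ∫ y, dist x y ∂π

section

variable [OpensMeasurableSpace X]

lemma lintegral_edist_le_add_W1 (μ ν : Measure X) (x : X) :
    ∫⁻ z, edist x z ∂ν ≤ ∫⁻ z, edist x z ∂μ + W1 μ ν := by
  have hmeas : Measurable fun z => edist x z := (continuous_const.edist continuous_id).measurable
  simp only [W1, ENNReal.add_iInf]
  refine le_iInf₂ fun ξ hfst => le_iInf fun hsnd => ?_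
  rw [← hfst, ← hsnd, lintegral_map hmeas measurable_fst, lintegral_map hmeas measurable_snd]
  exact (lintegral_mono fun p : X × X => edist_triangle x p.1 p.2).trans_eq
    (lintegral_add_left (hmeas.comp measurable_fst) _)

lemma PosCurvature.lintegral_edist_le {P : X → Measure X} {κ : ℝ} (hcurv : PosCurvature P κ)
    (hκ1 : κ ≤ 1) (x y : X) :
    ∫⁻ z, edist x z ∂(P y) ≤ ∫⁻ z, edist x z ∂(P x) + ENNReal.ofReal (1 - κ) * edist x y := by
  have hW1 : W1 (P x) (P y) ≤ ENNReal.ofReal (1 - κ) * edist x y := by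
    simpa only [ENNReal.ofReal_mul (sub_nonneg.2 hκ1), ← edist_dist] using hcurv x y
  exact (lintegral_edist_le_add_W1 _ _ x).trans (by gcongr)

lemma PosCurvature.lintegral_edist_le_of_invariant {P : X → Measure X} {κ : ℝ}
    (hcurv : PosCurvature P κ) (hκ1 : κ ≤ 1) (π : Measure X) [IsProbabilityMeasure π]
    (hπinv : π.bind P = π) (x : X) :
    ∫⁻ y, edist x y ∂π ≤
      ∫⁻ z, edist x z ∂(P x) + ENNReal.ofReal (1 - κ) * ∫⁻ y, edist x y ∂π := by
  calc ∫⁻ y, edist x y ∂π = ∫⁻ y, edist x y ∂(π.bind P) := by rw [hπinv]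
    _ ≤ ∫⁻ y, ∫⁻ z, edist x z ∂(P y) ∂π := Measure.lintegral_bind_le _ _ _
    _ ≤ ∫⁻ y, (∫⁻ z, edist x z ∂(P x) + ENNReal.ofReal (1 - κ) * edist x y) ∂π :=
        lintegral_mono (hcurv.lintegral_edist_le hκ1 x)
    _ = ∫⁻ z, edist x z ∂(P x) + ENNReal.ofReal (1 - κ) * ∫⁻ y, edist x y ∂π := by
        rw [lintegral_add_left measurable_const, lintegral_const_mul' _ _ ENNReal.ofReal_ne_top,
          lintegral_const, measure_univ, mul_one]

lemma integral_dist_eq_toReal_lintegral_edist (μ : Measure X) (x : X) :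
    ∫ y, dist x y ∂μ = (∫⁻ y, edist x y ∂μ).toReal := by
  simp_rw [edist_dist]
  exact integral_eq_lintegral_of_nonneg_ae (ae_of_all _ fun _ => dist_nonneg)
    (continuous_const.dist continuous_id).aestronglyMeasurable

end

lemma ENNReal.toReal_le_div_of_le_add_ofReal_mul {a l : ℝ≥0∞} {κ : ℝ} (ha : a ≠ ⊤) (hl : l ≠ ⊤)
    (hκ0 : 0 < κ) (hκ1 : κ ≤ 1) (h : a ≤ l + ENNReal.ofReal (1 - κ) * a) :
    a.toReal ≤ l.toReal / κ := by
  have hca : ENNReal.ofReal (1 - κ) * a ≠ ⊤ := ENNReal.mul_ne_top ENNReal.ofReal_ne_top ha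
  have h' := ENNReal.toReal_mono (ENNReal.add_ne_top.2 ⟨hl, hca⟩) h
  rw [ENNReal.toReal_add hl hca, ENNReal.toReal_mul, ENNReal.toReal_ofReal (by linarith)] at h'
  rw [le_div_iff₀ hκ0]
  linarith

theorem local_bound_on_eccentricity_general
    [BorelSpace X]
    (P : X → Measure X)
    (hPmom : ∀ x y : X, (∫⁻ z, edist y z ∂(P x)) ≠ ⊤)
    (κ : ℝ) (hκ0 : 0 < κ) (hκ1 : κ ≤ 1) (hcurv : PosCurvature P κ)
    (π : Measure X) (hπprob : IsProbabilityMeasure π) (hπinv : π.bind P = π)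
    (hπmom : ∀ y : X, (∫⁻ z, edist y z ∂π) ≠ ⊤)
    (x : X) :
    ecc π x ≤ (1 / κ) * ∫ y, dist x y ∂(P x) := by
  rw [ecc, integral_dist_eq_toReal_lintegral_edist, integral_dist_eq_toReal_lintegral_edist,
    one_div_mul_eq_div]
  exact ENNReal.toReal_le_div_of_le_add_ofReal_mul (hπmom x) (hPmom x x) hκ0 hκ1
    (hcurv.lintegral_edist_le_of_invariant hκ1 π hπinv x)

/-- **Local bound on the eccentricity**: under positive Ricci curvature `κ ∈ (0,1]`,
for every `x`, `E(x) ≤ (1/κ) ∫ d(x,y) P_x(dy)`. -/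
theorem local_bound_on_eccentricity
    [CompleteSpace X] [SecondCountableTopology X] [BorelSpace X]
    (P : X → Measure X) (hPmeas : Measurable P)
    (hPprob : ∀ x, IsProbabilityMeasure (P x))
    (hPmom : ∀ x y : X, (∫⁻ z, edist y z ∂(P x)) ≠ ⊤)
    (κ : ℝ) (hκ0 : 0 < κ) (hκ1 : κ ≤ 1) (hcurv : PosCurvature P κ)
    (π : Measure X) (hπprob : IsProbabilityMeasure π) (hπinv : π.bind P = π)
    (hπmom : ∀ y : X, (∫⁻ z, edist y z ∂π) ≠ ⊤)
    (x : X) :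
    ecc π x ≤ (1 / κ) * ∫ y, dist x y ∂(P x) :=
  local_bound_on_eccentricity_general P hPmom κ hκ0 hκ1 hcurv π hπprob hπinv hπmom x

end
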